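/- The labeled graph over alphabet {0,1} given by the graph E_ℤ with vertices v_n (n ∈ ℤ) and edges v_n → v_{n+1}, where the edge v_0 → v_1 is labeled 1 and all other edges are labeled 0, is pseudo-periodic: for every m > 1 and every word a_m⋯a_1 in the language L(E^m), there exist n ≥ 1 and words a_{i+m-1}⋯a_i ∈ L(E^m) for 1 ≤ i ≤ n+1 such that a_{n+m-1}⋯a_{n+1} = a_{m-1}⋯a_1. -/

import Mathlib

/-!
A word is in the language iff it contains at most one `1`. Extend `a_m ⋯ a_1` to the
`m`-periodic sequence and take `n = m`. Two consecutive length-`m` windows of an `m`-periodic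
sequence are obtained from the length-`(m+1)` window containing both by deleting its first or
its last letter, which are equal; so every window is a permutation of `a_m ⋯ a_1` and still has
at most one `1`, and periodicity gives `a_{2m-1} ⋯ a_{m+1} = a_{m-1} ⋯ a_1`.
-/

/-- The labeling of the graph `E_ℤ` (vertices `v_n`, edges `v_n → v_{n+1}`): the edge
`v_0 → v_1` is labeled `true` (i.e. `1`) and all other edges `false` (i.e. `0`). -/
def zLab : ℤ → Bool := fun z => decide (z = 0)

/-- The language of the labeled graph `(E_ℤ, L)`: a word lies in the language iff it is
the label of some path, i.e. reads `zLab` along consecutive integers. -/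
def zLang : Set (List Bool) :=
  { w | ∃ z : ℤ, w = List.ofFn fun k : Fin w.length => zLab (z + k) }

/-- The word `a_{i+m-1} ⋯ a_i` (read with decreasing indices from left to right). -/
def win (a : ℕ → Bool) (i m : ℕ) : List Bool :=
  List.ofFn fun k : Fin m => a (i + m - 1 - k)

open Finset Function

theorem List.count_ofFn {α : Type*} [DecidableEq α] {n : ℕ} (f : Fin n → α) (a : α) :
    (List.ofFn f).count a = #{i | a = f i} := by
  rw [← Multiset.coe_count, ← Fin.univ_val_map, Multiset.count_map, card_def, filter_val]

theorem mem_zLang_iff {w : List Bool} : w ∈ zLang ↔ w.count true ≤ 1 := by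
  constructor
  · rintro ⟨z, hw⟩
    rw [hw, List.count_ofFn, card_le_one]
    intro i hi j hj
    simp only [zLab, mem_filter, mem_univ, true_and, true_eq_decide_iff] at hi hj
    exact Fin.ext (by omega)
  · intro h
    rw [← List.ofFn_get w, List.count_ofFn, card_le_one] at h
    simp only [mem_filter, mem_univ, true_and] at h
    suffices ∃ z : ℤ, ∀ k, w.get k = zLab (z + k) by
      obtain ⟨z, hz⟩ := this
      exact ⟨z, (List.ofFn_get w).symm.trans (congrArg List.ofFn (funext hz))⟩
    by_cases hone : ∃ k₀, w.get k₀ = true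
    · obtain ⟨k₀, hk₀⟩ := hone
      refine ⟨-k₀, fun k => Bool.eq_iff_iff.mpr ?_⟩
      simp only [zLab, decide_eq_true_eq, neg_add_eq_zero, Nat.cast_inj, Fin.val_inj]
      exact ⟨fun hk => h k₀ hk₀.symm k hk.symm, fun hk => hk ▸ hk₀⟩
    · simp only [not_exists, Bool.not_eq_true] at hone
      refine ⟨1, fun k => ?_⟩
      rw [hone k, zLab, eq_comm, decide_eq_false_iff_not]
      omega

theorem win_succ_eq_cons (a : ℕ → Bool) (i m : ℕ) :
    win a i (m + 1) = a (i + m) :: win a i m := by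
  simp only [win, List.ofFn_succ, Fin.val_succ, Fin.val_zero]
  congr 2 with k
  congr 1
  omega

theorem win_succ_eq_append (a : ℕ → Bool) (i m : ℕ) :
    win a i (m + 1) = win a (i + 1) m ++ [a i] := by
  simp only [win, List.ofFn_succ_last]
  congr 2
  · funext k
    simp only [Fin.val_castSucc]
    congr 1
    omega
  · simp

theorem win_congr {a b : ℕ → Bool} {i m : ℕ} (h : ∀ j, i ≤ j → j < i + m → a j = b j) :
    win a i m = win b i m :=
  List.ofFn_inj.mpr <| funext fun k => h _ (by omega) (by omega)

namespace Function.Periodic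

variable {a : ℕ → Bool} {m : ℕ}

theorem win_add_period (ha : Periodic a m) (i l : ℕ) : win a (i + m) l = win a i l := by
  refine List.ofFn_inj.mpr <| funext fun k => ?_
  rw [← ha (i + l - 1 - k)]
  congr 1
  omega

theorem win_perm (ha : Periodic a m) (i j : ℕ) : (win a i m).Perm (win a j m) := by
  suffices key : ∀ i, (win a i m).Perm (win a 0 m) from (key i).trans (key j).symm
  intro i
  induction i with
  | zero => rfl
  | succ i ih =>
    have hshift : win a (i + 1) m ++ [a i] = a i :: win a i m := by
      rw [← win_succ_eq_append, win_succ_eq_cons, ha]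
    have hperm : (a i :: win a (i + 1) m).Perm (a i :: win a i m) :=
      hshift ▸ (List.perm_append_singleton _ _).symm
    exact ((List.perm_cons (a i)).mp hperm).trans ih

end Function.Periodic

def periodicExtend {α : Type*} (a : ℕ → α) (m : ℕ) (i : ℕ) : α :=
  if i % m = 0 then a m else a (i % m)

theorem periodic_periodicExtend {α : Type*} (a : ℕ → α) (m : ℕ) :
    Periodic (periodicExtend a m) m := fun i => by
  simp only [periodicExtend, Nat.add_mod_right]

theorem periodicExtend_apply {α : Type*} (a : ℕ → α) {m i : ℕ} (h1 : 1 ≤ i) (h2 : i ≤ m) :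
    periodicExtend a m i = a i := by
  rcases h2.lt_or_eq with h2 | rfl
  · rw [periodicExtend, Nat.mod_eq_of_lt h2, if_neg (by omega)]
  · rw [periodicExtend, Nat.mod_self, if_pos rfl]

/-- the labeled graph `(E_ℤ, L)` is pseudo-periodic: for every `m > 1` and
every word `a_m ⋯ a_1` in the language, there are `n ≥ 1` and letters extending the
sequence such that each block `a_{i+m-1} ⋯ a_i` (for `1 ≤ i ≤ n+1`) is in the language
and `a_{n+m-1} ⋯ a_{n+1} = a_{m-1} ⋯ a_1`. -/
theorem stmt16 :
    ∀ m : ℕ, 1 < m → ∀ a : ℕ → Bool, win a 1 m ∈ zLang →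
      ∃ n : ℕ, 1 ≤ n ∧ ∃ a' : ℕ → Bool,
        (∀ i, 1 ≤ i → i ≤ m → a' i = a i) ∧
        (∀ i, 1 ≤ i → i ≤ n + 1 → win a' i m ∈ zLang) ∧
        win a' (n + 1) (m - 1) = win a' 1 (m - 1) := by
  intro m hm a ha
  have hper := periodic_periodicExtend a m
  have hagree : ∀ i, 1 ≤ i → i ≤ m → periodicExtend a m i = a i :=
    fun i h1 h2 => periodicExtend_apply a h1 h2
  refine ⟨m, hm.le, periodicExtend a m, hagree, fun i _ _ => ?_, ?_⟩
  · rw [mem_zLang_iff, (hper.win_perm i 1).count_eq,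
      win_congr fun j h1 h2 => hagree j h1 (by omega), ← mem_zLang_iff]
    exact ha
  · rw [add_comm, hper.win_add_period]
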